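/- arXiv:2211.16293 — 2 statements merged into one kernel-verified Lean document; each statement's English description precedes it below -/
import Mathlib

section
/- Weak SDP duality for the adversary bound: Let L be an operator on 𝒜⊗ℬ, ξ, τ ∈ 𝒜⊗ℬ⊗𝒞 with ξ ≠ 0. Suppose π̄ ⪰ 0 on 𝒜⊗ℬ satisfies tr_ℬ(L π̄ L† − π̄) = tr_{ℬ𝒞}(|τ⟩⟨τ| − |ξ⟩⟨ξ|), and Γ is a Hermitian operator on 𝒜 satisfying L†(Γ⊗I_ℬ)L − Γ⊗I_ℬ ⪯ I_{𝒜ℬ}. Then ⟨τ| (Γ⊗I_{ℬ𝒞}) |τ⟩ − ⟨ξ| (Γ⊗I_{ℬ𝒞}) |ξ⟩ ≤ tr(π̄). -/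
/-!
Pair the primal constraint with `Γ`: the dual objective equals
`tr((Γ ⊗ I) (L π̄ L† - π̄)) = tr((L† (Γ ⊗ I) L - Γ ⊗ I) π̄)`, and the dual constraint bounds this
by `tr π̄`, because the trace of a product of two positive semidefinite matrices is nonnegative.
-/

open Matrix Kronecker Finset

open scoped ComplexOrder

/-- `L` is subunitary: `‖Lφ‖ ≤ ‖φ‖` for all vectors `φ`. -/
noncomputable def Subunitary {n : Type*} [Fintype n] [DecidableEq n] (L : Matrix n n ℂ) : Prop :=
  ∀ φ : EuclideanSpace ℂ n, ‖Matrix.toEuclideanLin L φ‖ ≤ ‖φ‖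

/-- Partial trace over the second factor `B`. -/
noncomputable def ptraceB {A B : Type*} [Fintype B] (M : Matrix (A × B) (A × B) ℂ) :
    Matrix A A ℂ :=
  Matrix.of fun i j => ∑ b : B, M (i, b) (j, b)

/-- Partial trace over the factors `B` and `C`. -/
noncomputable def ptraceBC {A B C : Type*} [Fintype B] [Fintype C]
    (M : Matrix ((A × B) × C) ((A × B) × C) ℂ) : Matrix A A ℂ :=
  Matrix.of fun i j => ∑ b : B, ∑ c : C, M ((i, b), c) ((j, b), c)

/-- Partial trace over the second factor `C`. -/
noncomputable def ptraceC {H C : Type*} [Fintype C] (M : Matrix (H × C) (H × C) ℂ) :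
    Matrix H H ℂ :=
  Matrix.of fun i j => ∑ c : C, M (i, c) (j, c)

namespace Matrix

open scoped MatrixOrder in
theorem PosSemidef.trace_mul_nonneg {𝕜 n : Type*} [RCLike 𝕜] [Fintype n]
    {X Y : Matrix n n 𝕜} (hX : X.PosSemidef) (hY : Y.PosSemidef) : 0 ≤ (X * Y).trace := by
  classical
  obtain ⟨B, rfl⟩ := CStarAlgebra.nonneg_iff_eq_star_mul_self.mp hY.nonneg
  rw [star_eq_conjTranspose, ← Matrix.mul_assoc, trace_mul_cycle]
  exact (hX.mul_mul_conjTranspose_same B).trace_nonneg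

theorem dotProduct_mulVec_eq_trace_mul_vecMulVec {n R : Type*} [Fintype n] [CommSemiring R]
    [StarRing R] (M : Matrix n n R) (v : n → R) :
    star v ⬝ᵥ M *ᵥ v = (M * vecMulVec v (star v)).trace := by
  rw [mul_vecMulVec, trace_vecMulVec, dotProduct_comm]

theorem trace_mul_conj_sub_eq_trace_conj_sub_mul {n R : Type*} [Fintype n] [CommRing R]
    [StarRing R] (G L P : Matrix n n R) :
    (G * (L * P * Lᴴ - P)).trace = ((Lᴴ * G * L - G) * P).trace := by
  rw [Matrix.mul_sub, Matrix.sub_mul, trace_sub, trace_sub, trace_mul_comm G, trace_mul_cycle,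
    trace_mul_cycle]
  simp only [Matrix.mul_assoc]

end Matrix

theorem trace_kronecker_one_mul {A B : Type*} [Fintype A] [Fintype B] [DecidableEq B]
    (Γ : Matrix A A ℂ) (N : Matrix (A × B) (A × B) ℂ) :
    ((Γ ⊗ₖ (1 : Matrix B B ℂ)) * N).trace = (Γ * ptraceB N).trace := by
  simp only [trace, diag_apply, mul_apply, Fintype.sum_prod_type, kroneckerMap_apply, one_apply,
    mul_ite, mul_one, mul_zero, ite_mul, zero_mul, sum_ite_eq, mem_univ, if_true, ptraceB, of_apply,
    mul_sum]
  exact sum_congr rfl fun _ _ => sum_comm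

theorem ptraceB_ptraceB {A B C : Type*} [Fintype B] [Fintype C]
    (M : Matrix ((A × B) × C) ((A × B) × C) ℂ) : ptraceB (ptraceB M) = ptraceBC M := rfl

theorem dotProduct_kronecker_one_one_mulVec {A B C : Type*} [Fintype A] [Fintype B] [Fintype C]
    [DecidableEq B] [DecidableEq C] (Γ : Matrix A A ℂ) (v : (A × B) × C → ℂ) :
    star v ⬝ᵥ ((Γ ⊗ₖ (1 : Matrix B B ℂ)) ⊗ₖ (1 : Matrix C C ℂ)) *ᵥ v
      = (Γ * ptraceBC (vecMulVec v (star v))).trace := by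
  rw [dotProduct_mulVec_eq_trace_mul_vecMulVec, trace_kronecker_one_mul, trace_kronecker_one_mul,
    ptraceB_ptraceB]

theorem stmt7_general {A B C : Type*} [Fintype A] [Fintype B] [Fintype C]
    [DecidableEq A] [DecidableEq B] [DecidableEq C]
    (L : Matrix (A × B) (A × B) ℂ) (ξ τ : (A × B) × C → ℂ)
    (πbar : Matrix (A × B) (A × B) ℂ) (hpsd : πbar.PosSemidef)
    (hprimal : ptraceB (L * πbar * Lᴴ - πbar) =
      ptraceBC (Matrix.vecMulVec τ (star τ)) - ptraceBC (Matrix.vecMulVec ξ (star ξ)))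
    (Γ : Matrix A A ℂ)
    (hdual : ((1 : Matrix (A × B) (A × B) ℂ) -
      (Lᴴ * (Γ ⊗ₖ (1 : Matrix B B ℂ)) * L - Γ ⊗ₖ (1 : Matrix B B ℂ))).PosSemidef) :
    star τ ⬝ᵥ (((Γ ⊗ₖ (1 : Matrix B B ℂ)) ⊗ₖ (1 : Matrix C C ℂ)).mulVec τ) -
        star ξ ⬝ᵥ (((Γ ⊗ₖ (1 : Matrix B B ℂ)) ⊗ₖ (1 : Matrix C C ℂ)).mulVec ξ) ≤
      πbar.trace := by
  set G := Γ ⊗ₖ (1 : Matrix B B ℂ)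
  have hbound : ((Lᴴ * G * L - G) * πbar).trace ≤ πbar.trace := by
    simpa only [Matrix.sub_mul, Matrix.one_mul, trace_sub, sub_nonneg] using
      hdual.trace_mul_nonneg hpsd
  calc _ = (Γ * ptraceB (L * πbar * Lᴴ - πbar)).trace := by
        rw [dotProduct_kronecker_one_one_mulVec, dotProduct_kronecker_one_one_mulVec, hprimal,
          Matrix.mul_sub, trace_sub]
    _ = (G * (L * πbar * Lᴴ - πbar)).trace := (trace_kronecker_one_mul Γ _).symm
    _ = ((Lᴴ * G * L - G) * πbar).trace := trace_mul_conj_sub_eq_trace_conj_sub_mul G L πbar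
    _ ≤ πbar.trace := hbound

/-- Weak SDP duality for the adversary bound. -/
theorem stmt7 {A B C : Type*} [Fintype A] [Fintype B] [Fintype C]
    [DecidableEq A] [DecidableEq B] [DecidableEq C]
    (L : Matrix (A × B) (A × B) ℂ) (ξ τ : (A × B) × C → ℂ) (hξ : ξ ≠ 0)
    (πbar : Matrix (A × B) (A × B) ℂ) (hpsd : πbar.PosSemidef)
    (hprimal : ptraceB (L * πbar * Lᴴ - πbar) =
      ptraceBC (Matrix.vecMulVec τ (star τ)) - ptraceBC (Matrix.vecMulVec ξ (star ξ)))
    (Γ : Matrix A A ℂ) (hΓ : Γ.IsHermitian)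
    (hdual : ((1 : Matrix (A × B) (A × B) ℂ) -
      (Lᴴ * (Γ ⊗ₖ (1 : Matrix B B ℂ)) * L - Γ ⊗ₖ (1 : Matrix B B ℂ))).PosSemidef) :
    star τ ⬝ᵥ (((Γ ⊗ₖ (1 : Matrix B B ℂ)) ⊗ₖ (1 : Matrix C C ℂ)).mulVec τ) -
        star ξ ⬝ᵥ (((Γ ⊗ₖ (1 : Matrix B B ℂ)) ⊗ₖ (1 : Matrix C C ℂ)).mulVec ξ) ≤
      πbar.trace :=
  stmt7_general L ξ τ πbar hpsd hprimal Γ hdual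
end

section
/- Universal algorithm feasibility: Let L on 𝒜⊗ℬ be an operator acting trivially on a unit vector |idle⟩ ∈ ℬ (L(φ⊗|idle⟩) = φ⊗|idle⟩ for all φ ∈ 𝒜). Let ρ_ξ, ρ_τ ⪰ 0 on 𝒜 and π̄ ⪰ 0 on 𝒜⊗ℬ satisfy tr_ℬ(L π̄ L† − π̄) = ρ_τ − ρ_ξ. For an integer T′ > 0 define π^j := ((T′−j)/T′ · ρ_ξ + j/T′ · ρ_τ) ⊗ |idle⟩⟨idle| + π̄/T′ for 0 ≤ j < T′. Then each π^j is positive semidefinite and tr_ℬ(π^{j+1}) = tr_ℬ(L π^j L†) for all 0 ≤ j ≤ T′−2. -/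
/-!
Since `L` fixes every product vector `φ ⊗ idle`, conjugation by `L` fixes every
`σ ⊗ |idle⟩⟨idle|`. Hence `L π^j L†` differs from `π^j` only in its `π̄/T'` part, and by the
feasibility equation that part contributes `(ρτ - ρξ)/T'` more to `tr_ℬ` — exactly the step
between consecutive interpolation weights. Positivity holds because every weight is
nonnegative for `j < T'`.
-/

open Matrix Kronecker Finset

open scoped ComplexOrder

section PartialTrace

variable {A B : Type*} [Fintype B]

lemma ptraceB_add (M N : Matrix (A × B) (A × B) ℂ) :
    ptraceB (M + N) = ptraceB M + ptraceB N := by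
  ext i j
  simp [ptraceB, sum_add_distrib]

lemma ptraceB_sub (M N : Matrix (A × B) (A × B) ℂ) :
    ptraceB (M - N) = ptraceB M - ptraceB N := by
  ext i j
  simp [ptraceB, sum_sub_distrib]

lemma ptraceB_smul (c : ℂ) (M : Matrix (A × B) (A × B) ℂ) :
    ptraceB (c • M) = c • ptraceB M := by
  ext i j
  simp [ptraceB, mul_sum]

lemma ptraceB_kronecker_vecMulVec (σ : Matrix A A ℂ) (u v : B → ℂ) :
    ptraceB (σ ⊗ₖ vecMulVec u v) = (v ⬝ᵥ u) • σ := by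
  ext i j
  simp [ptraceB, vecMulVec_apply, dotProduct, ← mul_sum, mul_comm]

end PartialTrace

section FixedFactor

variable {R A B : Type*} [Fintype A] [Fintype B] [CommSemiring R]
  {L : Matrix (A × B) (A × B) R} {u : B → R}

lemma mul_kronecker_vecMulVec_of_mulVec_eq
    (hL : ∀ φ : A → R, L *ᵥ (fun p : A × B => φ p.1 * u p.2) = fun p => φ p.1 * u p.2)
    (σ : Matrix A A R) (v : B → R) :
    L * (σ ⊗ₖ vecMulVec u v) = σ ⊗ₖ vecMulVec u v := by
  ext ⟨i, b⟩ ⟨j, b'⟩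
  have hcol := congrFun (hL fun a => σ a j * v b') (i, b)
  simp only [mulVec, dotProduct] at hcol
  simp only [mul_apply, kroneckerMap_apply, vecMulVec_apply]
  exact (sum_congr rfl fun p _ => by ring).trans (hcol.trans (by ring))

lemma mul_kronecker_vecMulVec_mul_conjTranspose_of_mulVec_eq [StarRing R]
    (hL : ∀ φ : A → R, L *ᵥ (fun p : A × B => φ p.1 * u p.2) = fun p => φ p.1 * u p.2)
    (σ : Matrix A A R) :
    L * (σ ⊗ₖ vecMulVec u (star u)) * Lᴴ = σ ⊗ₖ vecMulVec u (star u) := by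
  have hfix := mul_kronecker_vecMulVec_of_mulVec_eq hL
  calc L * (σ ⊗ₖ vecMulVec u (star u)) * Lᴴ
      = (L * (σᴴ ⊗ₖ vecMulVec u (star u)))ᴴ := by
        rw [hfix, conjTranspose_mul, conjTranspose_kronecker, conjTranspose_vecMulVec,
          conjTranspose_conjTranspose, star_star]
    _ = σ ⊗ₖ vecMulVec u (star u) := by
        rw [hfix, conjTranspose_kronecker, conjTranspose_vecMulVec, conjTranspose_conjTranspose,
          star_star]

end FixedFactor

theorem stmt9_general {A B : Type*} [Fintype A] [Fintype B]
    (L : Matrix (A × B) (A × B) ℂ) (idle : B → ℂ)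
    (hunit : star idle ⬝ᵥ idle = 1)
    (hidle : ∀ φ : A → ℂ,
      L.mulVec (fun p : A × B => φ p.1 * idle p.2) = fun p : A × B => φ p.1 * idle p.2)
    (ρξ ρτ : Matrix A A ℂ) (hρξ : ρξ.PosSemidef) (hρτ : ρτ.PosSemidef)
    (πbar : Matrix (A × B) (A × B) ℂ) (hπbar : πbar.PosSemidef)
    (hfeas : ptraceB (L * πbar * Lᴴ - πbar) = ρτ - ρξ)
    (T' : ℕ) (π : ℕ → Matrix (A × B) (A × B) ℂ)
    (hdef : ∀ j, π j =
      (((((T' : ℂ) - (j : ℂ)) / (T' : ℂ)) • ρξ + (((j : ℂ)) / (T' : ℂ)) • ρτ) ⊗ₖ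
        Matrix.vecMulVec idle (star idle)) + ((T' : ℂ))⁻¹ • πbar) :
    (∀ j < T', (π j).PosSemidef) ∧
      (∀ j, j + 1 ≤ T' - 1 → ptraceB (π (j + 1)) = ptraceB (L * π j * Lᴴ)) := by
  set σ : ℕ → Matrix A A ℂ := fun j => (((T' : ℂ) - j) / T') • ρξ + ((j : ℂ) / T') • ρτ
  have hσ_succ : ∀ j, σ (j + 1) = σ j + (T' : ℂ)⁻¹ • (ρτ - ρξ) := by
    intro j
    simp only [σ]
    push_cast
    module
  have hptrace_idle : ∀ τ : Matrix A A ℂ, ptraceB (τ ⊗ₖ vecMulVec idle (star idle)) = τ := by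
    simp [ptraceB_kronecker_vecMulVec, hunit]
  have hbar : ptraceB (L * πbar * Lᴴ) = (ρτ - ρξ) + ptraceB πbar := by
    rw [← hfeas, ptraceB_sub, sub_add_cancel]
  refine ⟨fun j hj => ?_, fun j _ => ?_⟩
  · have hcoef : (0 : ℂ) ≤ ((T' : ℂ) - j) / T' :=
      div_nonneg (sub_nonneg.mpr (by exact_mod_cast hj.le)) (Nat.cast_nonneg _)
    rw [hdef j]
    exact (((hρξ.smul hcoef).add (hρτ.smul (by positivity))).kronecker
      (posSemidef_vecMulVec_self_star idle)).add (hπbar.smul (by positivity))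
  · rw [hdef, hdef, Matrix.mul_add, Matrix.add_mul,
      mul_kronecker_vecMulVec_mul_conjTranspose_of_mulVec_eq hidle, Matrix.mul_smul,
      Matrix.smul_mul, ptraceB_add, ptraceB_add, ptraceB_smul, ptraceB_smul, hptrace_idle,
      hptrace_idle, hbar]
    change σ (j + 1) + _ = σ j + _
    rw [hσ_succ, smul_add, add_assoc]

/-- Universal algorithm feasibility: the interpolating sequence
`π^j = ((T'-j)/T'·ρξ + j/T'·ρτ) ⊗ |idle⟩⟨idle| + π̄/T'` is a feasible algorithm. -/
theorem stmt9 {A B : Type*} [Fintype A] [Fintype B] [DecidableEq A] [DecidableEq B]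
    (L : Matrix (A × B) (A × B) ℂ) (idle : B → ℂ)
    (hunit : star idle ⬝ᵥ idle = 1)
    (hidle : ∀ φ : A → ℂ,
      L.mulVec (fun p : A × B => φ p.1 * idle p.2) = fun p : A × B => φ p.1 * idle p.2)
    (ρξ ρτ : Matrix A A ℂ) (hρξ : ρξ.PosSemidef) (hρτ : ρτ.PosSemidef)
    (πbar : Matrix (A × B) (A × B) ℂ) (hπbar : πbar.PosSemidef)
    (hfeas : ptraceB (L * πbar * Lᴴ - πbar) = ρτ - ρξ)
    (T' : ℕ) (hT' : 0 < T') (π : ℕ → Matrix (A × B) (A × B) ℂ)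
    (hdef : ∀ j, π j =
      (((((T' : ℂ) - (j : ℂ)) / (T' : ℂ)) • ρξ + (((j : ℂ)) / (T' : ℂ)) • ρτ) ⊗ₖ
        Matrix.vecMulVec idle (star idle)) + ((T' : ℂ))⁻¹ • πbar) :
    (∀ j < T', (π j).PosSemidef) ∧
      (∀ j, j + 1 ≤ T' - 1 → ptraceB (π (j + 1)) = ptraceB (L * π j * Lᴴ)) :=
  stmt9_general L idle hunit hidle ρξ ρτ hρξ hρτ πbar hπbar hfeas T' π hdef
end
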